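/- arXiv:1811.12528 — 2 statements merged into one kernel-verified Lean document; each statement's English description precedes it below -/
import Mathlib

section
/- A countable tree T (with at least one edge) is edge-transitive if and only if there exist cardinals n₁, n₂ (each a positive integer or ℵ₀) such that every edge of T has one endpoint of valence n₁ and the other endpoint of valence n₂. -/
open SimpleGraph

variable {V : Type*}

/-- Two edges are related iff equal or they lie on a common cycle. -/
def EdgeRel (G : SimpleGraph V) (e₁ e₂ : Sym2 V) : Prop :=
  e₁ = e₂ ∨ ∃ (v : V) (c : G.Walk v v), c.IsCycle ∧ e₁ ∈ c.edges ∧ e₂ ∈ c.edges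

/-- The set of edges in the lobe of `e`. -/
def lobeEdges (G : SimpleGraph V) (e : Sym2 V) : Set (Sym2 V) :=
  {f | f ∈ G.edgeSet ∧ EdgeRel G e f}

/-- The lobe of an edge `e`, as a subgraph. -/
def lobeSubgraph (G : SimpleGraph V) (e : Sym2 V) : G.Subgraph where
  verts := {v | ∃ f ∈ lobeEdges G e, v ∈ f}
  Adj u w := G.Adj u w ∧ EdgeRel G e s(u, w)
  adj_sub h := h.1
  edge_vert h := ⟨_, ⟨h.1, h.2⟩, Sym2.mem_mk_left _ _⟩
  symm := ⟨fun u w h => ⟨h.1.symm, by rw [Sym2.eq_swap]; exact h.2⟩⟩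

/-- `Aut(G)` acts transitively on edges. -/
def EdgeTransitive (G : SimpleGraph V) : Prop :=
  ∀ e₁ ∈ G.edgeSet, ∀ e₂ ∈ G.edgeSet, ∃ φ : G ≃g G, Sym2.map ⇑φ e₁ = e₂

/-- `Aut(G)` acts transitively on vertices. -/
def VertexTransitive (G : SimpleGraph V) : Prop :=
  ∀ u v : V, ∃ φ : G ≃g G, φ u = v

/-- `Aut(G)` acts transitively on arcs (ordered pairs of adjacent vertices). -/
def ArcTransitive (G : SimpleGraph V) : Prop :=
  ∀ u₁ v₁ u₂ v₂ : V, G.Adj u₁ v₁ → G.Adj u₂ v₂ →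
    ∃ φ : G ≃g G, φ u₁ = u₂ ∧ φ v₁ = v₂

/-- `G` has a cut vertex: a vertex whose removal disconnects the graph. -/
def HasCutVertex (G : SimpleGraph V) : Prop :=
  ∃ v : V, ¬ (G.induce {w | w ≠ v}).Connected

/-- `G` has connectivity 1: connected with a cut vertex. -/
def ConnOne (G : SimpleGraph V) : Prop := G.Connected ∧ HasCutVertex G

/-- The set of lobes (as edge-classes) containing the vertex `v`. -/
def lobesAt (G : SimpleGraph V) (v : V) : Set (Set (Sym2 V)) :=
  {L | (∃ e ∈ G.edgeSet, L = lobeEdges G e) ∧ ∃ f ∈ L, v ∈ f}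

set_option linter.unusedSectionVars false
set_option linter.unusedVariables false

namespace Stmt3Aux
variable {V : Type*} [DecidableEq V] {T : SimpleGraph V}

lemma walk_eq_of_isPath (hT : T.IsTree) {u v : V} {p q : T.Walk u v}
    (hp : p.IsPath) (hq : q.IsPath) : p = q := by
  have := hT.IsAcyclic.path_unique ⟨p, hp⟩ ⟨q, hq⟩
  exact congrArg Subtype.val this

lemma isPath_length_eq_dist (hT : T.IsTree) {u v : V} {p : T.Walk u v}
    (hp : p.IsPath) : p.length = T.dist u v := by
  obtain ⟨q, hq⟩ := (hT.isConnected u v).exists_walk_length_eq_dist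
  have hbp : q.bypass.IsPath := SimpleGraph.Walk.bypass_isPath q
  have h1 : q.bypass.length ≤ T.dist u v := hq ▸ SimpleGraph.Walk.length_bypass_le q
  have h2 : T.dist u v ≤ q.bypass.length := SimpleGraph.dist_le _
  rw [walk_eq_of_isPath hT hp hbp]
  omega

lemma dist_le_of_mem_support {u v z : V} {p : T.Walk u v} (hz : z ∈ p.support) :
    T.dist z v ≤ p.length := by
  calc T.dist z v ≤ (p.dropUntil z hz).length := SimpleGraph.dist_le _
  _ ≤ p.length := SimpleGraph.Walk.length_dropUntil_le p hz

lemma dist_start_le_of_mem_support {u v z : V} {p : T.Walk u v} (hz : z ∈ p.support) :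
    T.dist u z ≤ p.length := by
  calc T.dist u z ≤ (p.takeUntil z hz).length := SimpleGraph.dist_le _
  _ ≤ p.length := SimpleGraph.Walk.length_takeUntil_le p hz

lemma adj_dist_cases (hT : T.IsTree) {x y : V} (hxy : T.Adj x y) (z : V) :
    T.dist z y = T.dist z x + 1 ∨ T.dist z x = T.dist z y + 1 := by
  obtain ⟨q, hq⟩ := (hT.isConnected y z).exists_walk_length_eq_dist
  have hqp : q.IsPath := q.isPath_of_length_eq_dist hq
  by_cases hx : x ∈ q.support
  · left
    have h1 : (q.takeUntil x hx).IsPath := hqp.takeUntil hx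
    have h2 : (q.dropUntil x hx).IsPath := hqp.dropUntil hx
    have l1 : (q.takeUntil x hx).length = T.dist y x := isPath_length_eq_dist hT h1
    have l2 : (q.dropUntil x hx).length = T.dist x z := isPath_length_eq_dist hT h2
    have l3 : (q.takeUntil x hx).length + (q.dropUntil x hx).length = q.length := by
      rw [← SimpleGraph.Walk.length_append, SimpleGraph.Walk.take_spec]
    have hd1 : T.dist y x = 1 := SimpleGraph.dist_eq_one_iff_adj.mpr hxy.symm
    rw [SimpleGraph.dist_comm (u := z) (v := y), SimpleGraph.dist_comm (u := z) (v := x)]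
    omega
  · right
    have hcons : (SimpleGraph.Walk.cons hxy q).IsPath := hqp.cons hx
    have := isPath_length_eq_dist hT hcons
    rw [SimpleGraph.Walk.length_cons] at this
    rw [SimpleGraph.dist_comm (u := z) (v := y), SimpleGraph.dist_comm (u := z) (v := x)]
    omega

/-- uniqueness of the lower neighbour. -/
lemma lower_unique (hT : T.IsTree) {a y x x' : V} (h1 : T.Adj y x) (h2 : T.Adj y x')
    (hd1 : T.dist a x + 1 = T.dist a y) (hd2 : T.dist a x' + 1 = T.dist a y) : x = x' := by
  obtain ⟨p, hp⟩ := (hT.isConnected x a).exists_walk_length_eq_dist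
  obtain ⟨p', hp'⟩ := (hT.isConnected x' a).exists_walk_length_eq_dist
  have hpp : p.IsPath := p.isPath_of_length_eq_dist hp
  have hpp' : p'.IsPath := p'.isPath_of_length_eq_dist hp'
  have hc1 : T.dist y a = T.dist a y := SimpleGraph.dist_comm
  have hc2 : T.dist x a = T.dist a x := SimpleGraph.dist_comm
  have hc3 : T.dist x' a = T.dist a x' := SimpleGraph.dist_comm
  have hyp : y ∉ p.support := by
    intro hy
    have := dist_le_of_mem_support hy
    omega
  have hyp' : y ∉ p'.support := by
    intro hy
    have := dist_le_of_mem_support hy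
    omega
  have hw : SimpleGraph.Walk.cons h1 p = SimpleGraph.Walk.cons h2 p' :=
    walk_eq_of_isPath hT (hpp.cons hyp) (hpp'.cons hyp')
  have := congrArg SimpleGraph.Walk.support hw
  rw [SimpleGraph.Walk.support_cons, SimpleGraph.Walk.support_cons,
    p.support_eq_cons, p'.support_eq_cons] at this
  obtain ⟨-, h⟩ := List.cons_eq_cons.mp this
  exact (List.cons_eq_cons.mp h).1

/-- a neighbour strictly closer to the root exists. -/
lemma exists_adj_lower (hT : T.IsTree) {a v : V} (hva : v ≠ a) :
    ∃ u, T.Adj v u ∧ T.dist a u + 1 = T.dist a v := by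
  obtain ⟨p, hp⟩ := (hT.isConnected v a).exists_walk_length_eq_dist
  have hpp : p.IsPath := p.isPath_of_length_eq_dist hp
  cases p with
  | nil => exact absurd rfl hva
  | cons h q =>
    rename_i w
    refine ⟨w, h, ?_⟩
    have hq : q.IsPath := hpp.of_cons
    have l1 : q.length = T.dist w a := isPath_length_eq_dist hT hq
    have l2 : (SimpleGraph.Walk.cons h q).length = T.dist v a := isPath_length_eq_dist hT hpp
    rw [SimpleGraph.Walk.length_cons] at l2
    have hc1 : T.dist w a = T.dist a w := SimpleGraph.dist_comm
    have hc2 : T.dist v a = T.dist a v := SimpleGraph.dist_comm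
    omega

/-- both distances to the two ends of the root edge drop when moving to the parent. -/
lemma exists_lower (hT : T.IsTree) {a b v : V} (hab : T.Adj a b)
    (hva : v ≠ a) (hvb : v ≠ b) :
    ∃ u, T.Adj v u ∧ T.dist a u + 1 = T.dist a v ∧ T.dist b u + 1 = T.dist b v := by
  have hv := adj_dist_cases hT hab v
  rw [SimpleGraph.dist_comm (u := v) (v := b), SimpleGraph.dist_comm (u := v) (v := a)] at hv
  rcases hv with hv | hv
  · -- dist b v = dist a v + 1 : v is on the a-side
    obtain ⟨u, hu, hd⟩ := exists_adj_lower hT hva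
    refine ⟨u, hu, hd, ?_⟩
    have h1 := adj_dist_cases hT hab u
    rw [SimpleGraph.dist_comm (u := u) (v := b), SimpleGraph.dist_comm (u := u) (v := a)] at h1
    have h2 := adj_dist_cases hT hu b
    omega
  · obtain ⟨u, hu, hd⟩ := exists_adj_lower hT hvb
    refine ⟨u, hu, ?_, hd⟩
    have h1 := adj_dist_cases hT hab u
    rw [SimpleGraph.dist_comm (u := u) (v := b), SimpleGraph.dist_comm (u := u) (v := a)] at h1
    have h2 := adj_dist_cases hT hu a
    omega

/-- the cross case is impossible except at the root edge. -/
lemma cross_case (hT : T.IsTree) {a b x y : V} (hab : T.Adj a b) (hxy : T.Adj x y)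
    (h1 : T.dist a y = T.dist a x + 1) (h2 : T.dist b x = T.dist b y + 1) :
    x = a ∧ y = b := by
  have hx := adj_dist_cases hT hab x
  rw [SimpleGraph.dist_comm (u := x) (v := b), SimpleGraph.dist_comm (u := x) (v := a)] at hx
  have hy := adj_dist_cases hT hab y
  rw [SimpleGraph.dist_comm (u := y) (v := b), SimpleGraph.dist_comm (u := y) (v := a)] at hy
  have hbx : T.dist b x = T.dist a x + 1 := by omega
  have hby : T.dist b y = T.dist a x := by omega
  -- geodesic from x to a
  obtain ⟨p, hp⟩ := (hT.isConnected x a).exists_walk_length_eq_dist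
  have hpp : p.IsPath := p.isPath_of_length_eq_dist hp
  have hpl : p.length = T.dist a x := by rw [hp]; exact SimpleGraph.dist_comm
  cases p with
  | nil =>
    -- x = a, so dist a x = 0, dist b y = 0, so y = b
    refine ⟨rfl, ?_⟩
    have h0 : T.dist a a = 0 := SimpleGraph.dist_self
    have hy0 : T.dist b y = 0 := by omega
    exact ((hT.isConnected b y).dist_eq_zero_iff.mp hy0).symm
  | cons h q =>
    rename_i z
    exfalso
    have hq : q.IsPath := hpp.of_cons
    have l1 : q.length = T.dist a z := by
      rw [isPath_length_eq_dist hT hq]; exact SimpleGraph.dist_comm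
    have l2 : (SimpleGraph.Walk.cons h q).length = T.dist a x :=
      (isPath_length_eq_dist hT hpp).trans SimpleGraph.dist_comm
    rw [SimpleGraph.Walk.length_cons] at l2
    -- geodesic from y to b
    obtain ⟨r, hr⟩ := (hT.isConnected y b).exists_walk_length_eq_dist
    have hrp : r.IsPath := r.isPath_of_length_eq_dist hr
    have hrl : r.length = T.dist b y := by rw [hr]; exact SimpleGraph.dist_comm
    -- first path x → b : x :: r
    have hxr : x ∉ r.support := by
      intro hmem
      have := dist_le_of_mem_support hmem
      have : T.dist x b = T.dist b x := SimpleGraph.dist_comm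
      omega
    have w1path : (SimpleGraph.Walk.cons hxy r).IsPath := hrp.cons hxr
    -- second path x → b : (cons h q) ++ (a-b edge)
    have hbp : b ∉ (SimpleGraph.Walk.cons h q).support := by
      intro hmem
      have h3 := dist_start_le_of_mem_support hmem
      have h4 : T.dist x b = T.dist b x := SimpleGraph.dist_comm
      omega
    have w2path : ((SimpleGraph.Walk.cons h q).append hab.toWalk).IsPath := by
      rw [SimpleGraph.Walk.isPath_def, SimpleGraph.Walk.support_append]
      have : hab.toWalk.support.tail = [b] := rfl
      rw [this]
      rw [SimpleGraph.Walk.isPath_def] at hpp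
      simp only [List.nodup_append, List.nodup_cons]
      refine ⟨hpp, by simp, ?_⟩
      intro t ht s hs
      simp only [List.mem_singleton] at hs
      subst hs
      intro hts
      subst hts
      exact hbp ht
    have hw : SimpleGraph.Walk.cons hxy r = (SimpleGraph.Walk.cons h q).append hab.toWalk :=
      walk_eq_of_isPath hT w1path w2path
    have hs := congrArg SimpleGraph.Walk.support hw
    rw [SimpleGraph.Walk.support_cons, SimpleGraph.Walk.support_append,
      SimpleGraph.Walk.support_cons, r.support_eq_cons, q.support_eq_cons] at hs
    -- y = z is forced
    have : y = z := by
      have := (List.cons_eq_cons.mp hs).2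
      simpa using (List.cons_eq_cons.mp this).1
    subst this
    omega

open scoped Classical in
/-- The parent of a vertex in the tree rooted at the edge `a-b`. -/
noncomputable def par (T : SimpleGraph V) (a b v : V) : V :=
  if v = a then b else if v = b then a
  else if h : ∃ u, T.Adj v u ∧ T.dist a u + 1 = T.dist a v ∧ T.dist b u + 1 = T.dist b v
  then h.choose else v

@[simp] lemma par_a (a b : V) : par T a b a = b := by simp [par]

lemma par_b {a b : V} (hne : b ≠ a) : par T a b b = a := by simp [par, hne]

lemma par_spec (hT : T.IsTree) {a b v : V} (hab : T.Adj a b) (hva : v ≠ a) (hvb : v ≠ b) :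
    T.Adj v (par T a b v) ∧ T.dist a (par T a b v) + 1 = T.dist a v ∧
      T.dist b (par T a b v) + 1 = T.dist b v := by
  have h := exists_lower hT hab hva hvb
  rw [par]
  simp only [hva, hvb, if_false]
  rw [dif_pos h]
  exact h.choose_spec

lemma adj_par (hT : T.IsTree) {a b : V} (hab : T.Adj a b) (v : V) :
    T.Adj v (par T a b v) := by
  by_cases hva : v = a
  · subst hva; rw [par_a]; exact hab
  by_cases hvb : v = b
  · subst hvb; rw [par_b hab.ne']; exact hab.symm
  exact (par_spec hT hab hva hvb).1

/-- key structural lemma: a neighbour of `y` other than its parent is a child of `y`. -/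
lemma child_par (hT : T.IsTree) {a b x y : V} (hab : T.Adj a b) (hxy : T.Adj x y)
    (hne : x ≠ par T a b y) :
    par T a b x = y ∧ T.dist a x = T.dist a y + 1 ∧ T.dist b x = T.dist b y + 1 := by
  have hda := adj_dist_cases hT hxy a
  have hdb := adj_dist_cases hT hxy b
  rcases hda with hda | hda <;> rcases hdb with hdb | hdb
  · -- y is the child of x : x = par y, contradiction
    exfalso
    have hya : y ≠ a := by
      intro h; rw [h] at hda
      have : T.dist a a = 0 := SimpleGraph.dist_self
      omega
    have hyb : y ≠ b := by
      intro h; rw [h] at hdb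
      have : T.dist b b = 0 := SimpleGraph.dist_self
      omega
    obtain ⟨hadj, hda', hdb'⟩ := par_spec hT hab hya hyb
    exact hne (lower_unique hT hxy.symm hadj (by omega) hda')
  · -- cross : x = a, y = b
    exfalso
    obtain ⟨hxa, hyb⟩ := cross_case hT hab hxy hda hdb
    subst hxa; subst hyb
    rw [par_b hab.ne'] at hne
    exact hne rfl
  · -- cross the other way : y = a, x = b
    exfalso
    obtain ⟨hya, hxb⟩ := cross_case hT hab hxy.symm hda hdb
    subst hya; subst hxb
    rw [par_a] at hne
    exact hne rfl
  · -- x is a child of y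
    have hxa : x ≠ a := by
      intro h; rw [h] at hda
      have : T.dist a a = 0 := SimpleGraph.dist_self
      omega
    have hxb : x ≠ b := by
      intro h; rw [h] at hdb
      have : T.dist b b = 0 := SimpleGraph.dist_self
      omega
    obtain ⟨hadj, hda', hdb'⟩ := par_spec hT hab hxa hxb
    exact ⟨lower_unique hT hadj hxy hda' (by omega), hda, hdb⟩

lemma nonempty_childEquiv {v w pv pw : V} (hpv : T.Adj v pv) (hpw : T.Adj w pw)
    (h : Cardinal.mk (T.neighborSet v) = Cardinal.mk (T.neighborSet w)) :
    Nonempty ({x : V // T.Adj v x ∧ x ≠ pv} ≃ {y : V // T.Adj w y ∧ y ≠ pw}) := by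
  obtain ⟨e0⟩ := Cardinal.eq.mp h
  set P : T.neighborSet v := ⟨pv, hpv⟩ with hP
  set Q : T.neighborSet w := ⟨pw, hpw⟩ with hQ
  let e1 : T.neighborSet v ≃ T.neighborSet w := e0.trans (Equiv.swap (e0 P) Q)
  have he1P : e1 P = Q := by simp [e1]
  have hcond : ∀ z : T.neighborSet v, z ≠ P ↔ e1 z ≠ Q := by
    intro z
    constructor
    · intro hz hq
      exact hz (e1.injective (hq.trans he1P.symm))
    · intro hz hq
      exact hz (hq ▸ he1P)
  let eMid : {z : T.neighborSet v // z ≠ P} ≃ {z : T.neighborSet w // z ≠ Q} :=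
    Equiv.subtypeEquiv e1 hcond
  let eA : {x : V // T.Adj v x ∧ x ≠ pv} ≃ {z : T.neighborSet v // z ≠ P} :=
    { toFun := fun x => ⟨⟨x.1, x.2.1⟩, fun hh => x.2.2 (congrArg Subtype.val hh)⟩
      invFun := fun z => ⟨z.1.1, z.1.2, fun hh => z.2 (Subtype.ext hh)⟩
      left_inv := fun x => rfl
      right_inv := fun z => rfl }
  let eB : {y : V // T.Adj w y ∧ y ≠ pw} ≃ {z : T.neighborSet w // z ≠ Q} :=
    { toFun := fun x => ⟨⟨x.1, x.2.1⟩, fun hh => x.2.2 (congrArg Subtype.val hh)⟩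
      invFun := fun z => ⟨z.1.1, z.1.2, fun hh => z.2 (Subtype.ext hh)⟩
      left_inv := fun x => rfl
      right_inv := fun z => rfl }
  exact ⟨eA.trans (eMid.trans eB.symm)⟩

open scoped Classical in
/-- the chosen bijection between children of `v` (rooted at `a-b`) and children
of `w` (rooted at `c-d`), if one exists. -/
noncomputable def chi (T : SimpleGraph V) (a b c d v w : V) :
    Option ({x : V // T.Adj v x ∧ x ≠ par T a b v} ≃ {y : V // T.Adj w y ∧ y ≠ par T c d w}) :=
  if h : Nonempty ({x : V // T.Adj v x ∧ x ≠ par T a b v} ≃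
      {y : V // T.Adj w y ∧ y ≠ par T c d w}) then some h.some else none

open scoped Classical in
noncomputable def Fmap (T : SimpleGraph V) (a b c d v w x : V) : V :=
  (chi T a b c d v w).elim x (fun e =>
    if hx : T.Adj v x ∧ x ≠ par T a b v then (e ⟨x, hx⟩).1 else x)

open scoped Classical in
noncomputable def Gmap (T : SimpleGraph V) (a b c d v w y : V) : V :=
  (chi T a b c d v w).elim y (fun e =>
    if hy : T.Adj w y ∧ y ≠ par T c d w then (e.symm ⟨y, hy⟩).1 else y)

lemma chi_isSome {a b c d v w : V} (hpv : T.Adj v (par T a b v)) (hpw : T.Adj w (par T c d w))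
    (h : Cardinal.mk (T.neighborSet v) = Cardinal.mk (T.neighborSet w)) :
    ∃ e, chi T a b c d v w = some e := by
  rw [chi, dif_pos (nonempty_childEquiv hpv hpw h)]
  exact ⟨_, rfl⟩

lemma Fmap_spec {a b c d v w x : V} (hpv : T.Adj v (par T a b v))
    (hpw : T.Adj w (par T c d w))
    (h : Cardinal.mk (T.neighborSet v) = Cardinal.mk (T.neighborSet w))
    (hx : T.Adj v x ∧ x ≠ par T a b v) :
    (T.Adj w (Fmap T a b c d v w x) ∧ Fmap T a b c d v w x ≠ par T c d w) ∧
      Gmap T a b c d v w (Fmap T a b c d v w x) = x := by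
  obtain ⟨e, he⟩ := chi_isSome hpv hpw h
  have hFx : Fmap T a b c d v w x = (e ⟨x, hx⟩).1 := by
    rw [Fmap, he]
    simp only [Option.elim_some]
    rw [dif_pos hx]
  rw [hFx]
  refine ⟨(e ⟨x, hx⟩).2, ?_⟩
  rw [Gmap, he]
  simp only [Option.elim_some]
  rw [dif_pos (e ⟨x, hx⟩).2]
  have : (⟨(e ⟨x, hx⟩).1, (e ⟨x, hx⟩).2⟩ : {y : V // T.Adj w y ∧ y ≠ par T c d w}) = e ⟨x, hx⟩ :=
    Subtype.ext rfl
  rw [this, Equiv.symm_apply_apply]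

lemma Gmap_spec {a b c d v w y : V} (hpv : T.Adj v (par T a b v))
    (hpw : T.Adj w (par T c d w))
    (h : Cardinal.mk (T.neighborSet v) = Cardinal.mk (T.neighborSet w))
    (hy : T.Adj w y ∧ y ≠ par T c d w) :
    (T.Adj v (Gmap T a b c d v w y) ∧ Gmap T a b c d v w y ≠ par T a b v) ∧
      Fmap T a b c d v w (Gmap T a b c d v w y) = y := by
  obtain ⟨e, he⟩ := chi_isSome hpv hpw h
  have hGy : Gmap T a b c d v w y = (e.symm ⟨y, hy⟩).1 := by
    rw [Gmap, he]
    simp only [Option.elim_some]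
    rw [dif_pos hy]
  rw [hGy]
  refine ⟨(e.symm ⟨y, hy⟩).2, ?_⟩
  rw [Fmap, he]
  simp only [Option.elim_some]
  rw [dif_pos (e.symm ⟨y, hy⟩).2]
  have : (⟨(e.symm ⟨y, hy⟩).1, (e.symm ⟨y, hy⟩).2⟩ :
      {x : V // T.Adj v x ∧ x ≠ par T a b v}) = e.symm ⟨y, hy⟩ :=
    Subtype.ext rfl
  rw [this, Equiv.apply_symm_apply]


noncomputable def phi (T : SimpleGraph V) [DecidableEq V] (hT : T.IsTree) {a b : V}
    (hab : T.Adj a b) (c d : V) (v : V) : V :=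
  if hva : v = a then c else if hvb : v = b then d
  else Fmap T a b c d (par T a b v) (phi T hT hab c d (par T a b v)) v
  termination_by T.dist a v
  decreasing_by
    have := (par_spec hT hab hva hvb).2.1
    omega

noncomputable def psi (T : SimpleGraph V) [DecidableEq V] (hT : T.IsTree) (a b : V) {c d : V}
    (hcd : T.Adj c d) (y : V) : V :=
  if hyc : y = c then a else if hyd : y = d then b
  else Gmap T a b c d (psi T hT a b hcd (par T c d y)) (par T c d y) y
  termination_by T.dist c y
  decreasing_by
    have := (par_spec hT hcd hyc hyd).2.1
    omega


variable {hT : T.IsTree}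

lemma phi_a {a b c d : V} (hT : T.IsTree) (hab : T.Adj a b) : phi T hT hab c d a = c := by
  rw [phi]; simp

lemma phi_b {a b c d : V} (hT : T.IsTree) (hab : T.Adj a b) (hba : b ≠ a) :
    phi T hT hab c d b = d := by
  rw [phi]; simp [hba]

lemma phi_ne {a b c d v : V} (hT : T.IsTree) (hab : T.Adj a b) (hva : v ≠ a) (hvb : v ≠ b) :
    phi T hT hab c d v =
      Fmap T a b c d (par T a b v) (phi T hT hab c d (par T a b v)) v := by
  rw [phi]; simp [hva, hvb]

lemma psi_c {a b c d : V} (hT : T.IsTree) (hcd : T.Adj c d) : psi T hT a b hcd c = a := by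
  rw [psi]; simp

lemma psi_d {a b c d : V} (hT : T.IsTree) (hcd : T.Adj c d) (hdc : d ≠ c) :
    psi T hT a b hcd d = b := by
  rw [psi]; simp [hdc]

lemma psi_ne {a b c d y : V} (hT : T.IsTree) (hcd : T.Adj c d) (hyc : y ≠ c) (hyd : y ≠ d) :
    psi T hT a b hcd y =
      Gmap T a b c d (psi T hT a b hcd (par T c d y)) (par T c d y) y := by
  rw [psi]; simp [hyc, hyd]


lemma phi_inv (hT : T.IsTree) {a b c d : V} (hab : T.Adj a b) (hcd : T.Adj c d)
    (hdeg : ∀ x y x' y' : V, T.Adj x y → T.Adj x' y' →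
      Cardinal.mk (T.neighborSet y) = Cardinal.mk (T.neighborSet y') →
      Cardinal.mk (T.neighborSet x) = Cardinal.mk (T.neighborSet x'))
    (hac : Cardinal.mk (T.neighborSet a) = Cardinal.mk (T.neighborSet c))
    (hbd : Cardinal.mk (T.neighborSet b) = Cardinal.mk (T.neighborSet d)) :
    ∀ n (v : V), T.dist a v = n →
      T.dist c (phi T hT hab c d v) = T.dist a v ∧
      Cardinal.mk (T.neighborSet (phi T hT hab c d v)) = Cardinal.mk (T.neighborSet v) ∧
      par T c d (phi T hT hab c d v) = phi T hT hab c d (par T a b v) ∧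
      psi T hT a b hcd (phi T hT hab c d v) = v := by
  intro n
  induction n using Nat.strong_induction_on with
  | _ n IH =>
  intro v hv
  by_cases hva : v = a
  · subst hva
    rw [phi_a hT hab, par_a, par_a, phi_b hT hab hab.ne', psi_c hT hcd]
    refine ⟨by rw [SimpleGraph.dist_self, SimpleGraph.dist_self], hac.symm, rfl, rfl⟩
  by_cases hvb : v = b
  · subst hvb
    rw [phi_b hT hab hab.ne', par_b hab.ne', par_b hcd.ne', phi_a hT hab, psi_d hT hcd hcd.ne']
    refine ⟨?_, hbd.symm, rfl, rfl⟩
    rw [SimpleGraph.dist_eq_one_iff_adj.mpr hcd, SimpleGraph.dist_eq_one_iff_adj.mpr hab]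
  · -- main case
    obtain ⟨hadj_vu, hdau, hdbu⟩ := par_spec hT hab hva hvb
    set u := par T a b v with hu
    have hn1 : 1 ≤ n := by
      have := (hT.isConnected a v).pos_dist_of_ne (Ne.symm hva)
      omega
    obtain ⟨ih1, ih2, ih3, ih4⟩ := IH (n-1) (by omega) u (by omega)
    have hpw : T.Adj (phi T hT hab c d u) (par T c d (phi T hT hab c d u)) :=
      adj_par hT hcd _
    have hx : T.Adj u v ∧ v ≠ par T a b u := by
      refine ⟨hadj_vu.symm, ?_⟩
      by_cases hua : u = a
      · rw [hua, par_a]; exact hvb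
      by_cases hub : u = b
      · rw [hub, par_b hab.ne']; exact hva
      · obtain ⟨-, hq, -⟩ := par_spec hT hab hua hub
        intro hcontra
        rw [← hcontra] at hq
        omega
    have hFspec := Fmap_spec (a := a) (b := b) (c := c) (d := d)
      (adj_par hT hab u) hpw ih2.symm hx
    obtain ⟨⟨hadjF, hneF⟩, hG⟩ := hFspec
    have hphiv : phi T hT hab c d v = Fmap T a b c d u (phi T hT hab c d u) v :=
      phi_ne hT hab hva hvb
    rw [hphiv]
    set w := Fmap T a b c d u (phi T hT hab c d u) v with hw
    obtain ⟨hpar_w, hdcw, hddw⟩ := child_par hT hcd hadjF.symm hneF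
    have hdau' : T.dist a u = n - 1 := by omega
    have hdcw' : T.dist c w = n := by
      rw [hdcw, ih1]
      omega
    refine ⟨by omega, ?_, ?_, ?_⟩
    · exact hdeg w (phi T hT hab c d u) v u hadjF.symm hadj_vu
        (ih2.trans (by rw [hu]))
    · rw [hpar_w, hu]
    · -- psi (phi v) = v
      have hwc : w ≠ c := by
        intro h
        rw [h, SimpleGraph.dist_self] at hdcw'
        omega
      have hwd : w ≠ d := by
        by_cases hua : u = a
        · intro h
          rw [h] at hneF
          apply hneF
          rw [hua, phi_a hT hab, par_a]
        · intro h
          have h2 : 2 ≤ n := by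
            have := (hT.isConnected a u).pos_dist_of_ne (Ne.symm hua)
            omega
          rw [h, SimpleGraph.dist_eq_one_iff_adj.mpr hcd] at hdcw'
          omega
      rw [psi_ne hT hcd hwc hwd, hpar_w, ih4]
      exact hG

lemma psi_inv (hT : T.IsTree) {a b c d : V} (hab : T.Adj a b) (hcd : T.Adj c d)
    (hdeg : ∀ x y x' y' : V, T.Adj x y → T.Adj x' y' →
      Cardinal.mk (T.neighborSet y) = Cardinal.mk (T.neighborSet y') →
      Cardinal.mk (T.neighborSet x) = Cardinal.mk (T.neighborSet x'))
    (hac : Cardinal.mk (T.neighborSet a) = Cardinal.mk (T.neighborSet c))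
    (hbd : Cardinal.mk (T.neighborSet b) = Cardinal.mk (T.neighborSet d)) :
    ∀ n (y : V), T.dist c y = n →
      T.dist a (psi T hT a b hcd y) = T.dist c y ∧
      Cardinal.mk (T.neighborSet (psi T hT a b hcd y)) = Cardinal.mk (T.neighborSet y) ∧
      par T a b (psi T hT a b hcd y) = psi T hT a b hcd (par T c d y) ∧
      phi T hT hab c d (psi T hT a b hcd y) = y := by
  intro n
  induction n using Nat.strong_induction_on with
  | _ n IH =>
  intro y hy
  by_cases hyc : y = c
  · subst hyc
    rw [psi_c hT hcd, par_a, par_a, psi_d hT hcd hcd.ne', phi_a hT hab]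
    exact ⟨by rw [SimpleGraph.dist_self, SimpleGraph.dist_self], hac, rfl, rfl⟩
  by_cases hyd : y = d
  · subst hyd
    rw [psi_d hT hcd hcd.ne', par_b hcd.ne', par_b hab.ne', psi_c hT hcd, phi_b hT hab hab.ne']
    refine ⟨?_, hbd, rfl, rfl⟩
    rw [SimpleGraph.dist_eq_one_iff_adj.mpr hcd, SimpleGraph.dist_eq_one_iff_adj.mpr hab]
  · -- main case
    obtain ⟨hadj_yu, hdcu, hddu⟩ := par_spec hT hcd hyc hyd
    set u := par T c d y with hu
    have hn1 : 1 ≤ n := by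
      have := (hT.isConnected c y).pos_dist_of_ne (Ne.symm hyc)
      omega
    obtain ⟨ih1, ih2, ih3, ih4⟩ := IH (n-1) (by omega) u (by omega)
    have hpv : T.Adj (psi T hT a b hcd u) (par T a b (psi T hT a b hcd u)) :=
      adj_par hT hab _
    have hyu : T.Adj u y ∧ y ≠ par T c d u := by
      refine ⟨hadj_yu.symm, ?_⟩
      by_cases huc : u = c
      · rw [huc, par_a]; exact hyd
      by_cases hud : u = d
      · rw [hud, par_b hcd.ne']; exact hyc
      · obtain ⟨-, hq, -⟩ := par_spec hT hcd huc hud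
        intro hcontra
        rw [← hcontra] at hq
        omega
    have hGspec := Gmap_spec (a := a) (b := b) (c := c) (d := d)
      (v := psi T hT a b hcd u) (w := u) hpv (adj_par hT hcd u) ih2 hyu
    obtain ⟨⟨hadjG, hneG⟩, hF⟩ := hGspec
    have hpsiy : psi T hT a b hcd y = Gmap T a b c d (psi T hT a b hcd u) u y :=
      psi_ne hT hcd hyc hyd
    rw [hpsiy]
    set w := Gmap T a b c d (psi T hT a b hcd u) u y with hw
    obtain ⟨hpar_w, hdaw, hdbw⟩ := child_par hT hab hadjG.symm hneG
    have hdcu' : T.dist c u = n - 1 := by omega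
    have hdaw' : T.dist a w = n := by
      rw [hdaw, ih1]
      omega
    refine ⟨by omega, ?_, ?_, ?_⟩
    · exact hdeg w (psi T hT a b hcd u) y u hadjG.symm hadj_yu
        (ih2.trans (by rw [hu]))
    · rw [hpar_w, hu]
    · -- phi (psi y) = y
      have hwa : w ≠ a := by
        intro h
        rw [h, SimpleGraph.dist_self] at hdaw'
        omega
      have hwb : w ≠ b := by
        by_cases huc : u = c
        · intro h
          rw [h] at hneG
          apply hneG
          rw [huc, psi_c hT hcd, par_a]
        · intro h
          have h2 : 2 ≤ n := by
            have := (hT.isConnected c u).pos_dist_of_ne (Ne.symm huc)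
            omega
          rw [h, SimpleGraph.dist_eq_one_iff_adj.mpr hab] at hdaw'
          omega
      rw [phi_ne hT hab hwa hwb, hpar_w, ih4]
      exact hF

lemma exists_iso (hT : T.IsTree) {a b c d : V} (hab : T.Adj a b) (hcd : T.Adj c d)
    (hdeg : ∀ x y x' y' : V, T.Adj x y → T.Adj x' y' →
      Cardinal.mk (T.neighborSet y) = Cardinal.mk (T.neighborSet y') →
      Cardinal.mk (T.neighborSet x) = Cardinal.mk (T.neighborSet x'))
    (hac : Cardinal.mk (T.neighborSet a) = Cardinal.mk (T.neighborSet c))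
    (hbd : Cardinal.mk (T.neighborSet b) = Cardinal.mk (T.neighborSet d)) :
    ∃ φ : T ≃g T, φ a = c ∧ φ b = d := by
  have hinv1 := fun v => phi_inv hT hab hcd hdeg hac hbd (T.dist a v) v rfl
  have hinv2 := fun y => psi_inv hT hab hcd hdeg hac hbd (T.dist c y) y rfl
  have hfadj : ∀ x y : V, T.Adj x y →
      T.Adj (phi T hT hab c d x) (phi T hT hab c d y) := by
    intro x y hxy
    by_cases h : x = par T a b y
    · rw [h, ← (hinv1 y).2.2.1]
      exact (adj_par hT hcd (phi T hT hab c d y)).symm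
    · rw [← (child_par hT hab hxy h).1, ← (hinv1 x).2.2.1]
      exact adj_par hT hcd (phi T hT hab c d x)
  have hgadj : ∀ x y : V, T.Adj x y →
      T.Adj (psi T hT a b hcd x) (psi T hT a b hcd y) := by
    intro x y hxy
    by_cases h : x = par T c d y
    · rw [h, ← (hinv2 y).2.2.1]
      exact (adj_par hT hab (psi T hT a b hcd y)).symm
    · rw [← (child_par hT hcd hxy h).1, ← (hinv2 x).2.2.1]
      exact adj_par hT hab (psi T hT a b hcd x)
  refine ⟨⟨⟨phi T hT hab c d, psi T hT a b hcd,
      fun v => (hinv1 v).2.2.2, fun y => (hinv2 y).2.2.2⟩, ?_⟩, ?_, ?_⟩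
  · intro x y
    simp only [Equiv.coe_fn_mk]
    constructor
    · intro h
      have h2 := hgadj _ _ h
      rwa [(hinv1 x).2.2.2, (hinv1 y).2.2.2] at h2
    · exact hfadj x y
  · exact phi_a hT hab
  · exact phi_b hT hab hab.ne'

end Stmt3Aux

theorem stmt_3 {V : Type*} [Countable V] (T : SimpleGraph V) (hT : T.IsTree)
    (hE : T.edgeSet.Nonempty) :
    EdgeTransitive T ↔ ∃ n₁ n₂ : Cardinal,
      0 < n₁ ∧ n₁ ≤ Cardinal.aleph0 ∧ 0 < n₂ ∧ n₂ ≤ Cardinal.aleph0 ∧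
      ∀ u v : V, T.Adj u v →
        (Cardinal.mk (T.neighborSet u) = n₁ ∧ Cardinal.mk (T.neighborSet v) = n₂) ∨
        (Cardinal.mk (T.neighborSet u) = n₂ ∧ Cardinal.mk (T.neighborSet v) = n₁) := by
  classical
  constructor
  · -- edge-transitive implies bi-regular
    intro hET
    obtain ⟨e, he⟩ := hE
    induction e using Sym2.ind with
    | _ a b =>
    rw [SimpleGraph.mem_edgeSet] at he
    refine ⟨Cardinal.mk (T.neighborSet a), Cardinal.mk (T.neighborSet b),
      ?_, Cardinal.mk_le_aleph0, ?_, Cardinal.mk_le_aleph0, ?_⟩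
    · rw [pos_iff_ne_zero, Cardinal.mk_ne_zero_iff]
      exact ⟨⟨b, he⟩⟩
    · rw [pos_iff_ne_zero, Cardinal.mk_ne_zero_iff]
      exact ⟨⟨a, he.symm⟩⟩
    · intro u v huv
      obtain ⟨φ, hφ⟩ := hET s(a, b) ((T.mem_edgeSet).mpr he)
        s(u, v) ((T.mem_edgeSet).mpr huv)
      rw [Sym2.map_pair_eq] at hφ
      have hcard1 : Cardinal.mk (T.neighborSet (φ a)) = Cardinal.mk (T.neighborSet a) :=
        (Cardinal.mk_congr (φ.mapNeighborSet a)).symm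
      have hcard2 : Cardinal.mk (T.neighborSet (φ b)) = Cardinal.mk (T.neighborSet b) :=
        (Cardinal.mk_congr (φ.mapNeighborSet b)).symm
      rcases Sym2.eq_iff.mp hφ with ⟨h1, h2⟩ | ⟨h1, h2⟩
      · left
        rw [← h1, ← h2]
        exact ⟨hcard1, hcard2⟩
      · right
        rw [← h1, ← h2]
        exact ⟨hcard2, hcard1⟩
  · -- bi-regular implies edge-transitive
    rintro ⟨n₁, n₂, -, -, -, -, hcond⟩
    intro e₁ he₁ e₂ he₂
    induction e₁ using Sym2.ind with
    | _ a b =>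
    induction e₂ using Sym2.ind with
    | _ c₀ d₀ =>
    rw [SimpleGraph.mem_edgeSet] at he₁ he₂
    have hdeg : ∀ x y x' y' : V, T.Adj x y → T.Adj x' y' →
        Cardinal.mk (T.neighborSet y) = Cardinal.mk (T.neighborSet y') →
        Cardinal.mk (T.neighborSet x) = Cardinal.mk (T.neighborSet x') := by
      intro x y x' y' h h' hyy'
      rcases hcond x y h with ⟨h1, h2⟩ | ⟨h1, h2⟩ <;>
        rcases hcond x' y' h' with ⟨h1', h2'⟩ | ⟨h1', h2'⟩ <;> grind
    have hor : ∃ c d : V, s(c, d) = s(c₀, d₀) ∧ T.Adj c d ∧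
        Cardinal.mk (T.neighborSet a) = Cardinal.mk (T.neighborSet c) ∧
        Cardinal.mk (T.neighborSet b) = Cardinal.mk (T.neighborSet d) := by
      rcases hcond a b he₁ with ⟨h1, h2⟩ | ⟨h1, h2⟩ <;>
        rcases hcond c₀ d₀ he₂ with ⟨h1', h2'⟩ | ⟨h1', h2'⟩
      · exact ⟨c₀, d₀, rfl, he₂, by grind, by grind⟩
      · exact ⟨d₀, c₀, Sym2.eq_swap, he₂.symm, by grind, by grind⟩
      · exact ⟨d₀, c₀, Sym2.eq_swap, he₂.symm, by grind, by grind⟩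
      · exact ⟨c₀, d₀, rfl, he₂, by grind, by grind⟩
    obtain ⟨c, d, hcd_eq, hcd, hac, hbd⟩ := hor
    obtain ⟨φ, hφa, hφb⟩ := Stmt3Aux.exists_iso hT he₁ hcd hdeg hac hbd
    exact ⟨φ, by rw [Sym2.map_pair_eq, hφa, hφb, hcd_eq]⟩
end

section
/- If a graph Γ is edge-transitive, then every lobe of Γ is itself an edge-transitive graph. -/
open SimpleGraph

variable {V : Type*}

section Helpers

variable {G : SimpleGraph V}

/-- In a path, no dart's second vertex is the start. -/
lemma aux_no_dart_snd_start {u w : V} {Q : G.Walk u w} (hQ : Q.IsPath) {d : G.Dart}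
    (hd : d ∈ Q.darts) (h : d.snd = u) : False := by
  cases Q with
  | nil => simp at hd
  | cons ha Q' =>
    rw [SimpleGraph.Walk.darts_cons, List.mem_cons] at hd
    rcases hd with rfl | hd
    · exact ha.ne (by simpa using h.symm)
    · have := Q'.dart_snd_mem_support_of_mem_darts hd
      rw [h] at this
      exact ((SimpleGraph.Walk.cons_isPath_iff _ _).mp hQ).2 this

/-- In a path, no dart's first vertex is the end. -/
lemma aux_no_dart_fst_end {u w : V} {Q : G.Walk u w} (hQ : Q.IsPath) {d : G.Dart}
    (hd : d ∈ Q.darts) (h : d.fst = w) : False := by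
  apply aux_no_dart_snd_start hQ.reverse (d := d.symm) _ h
  rw [SimpleGraph.Walk.darts_reverse, List.mem_reverse, List.mem_map]
  exact ⟨d, hd, rfl⟩

/-- If a path from x to y contains the edge s(x,y), it is that single edge. -/
lemma aux_single_edge {x y : V} {Q : G.Walk x y} (hQ : Q.IsPath)
    (h : s(x, y) ∈ Q.edges) : Q.edges = [s(x, y)] := by
  rw [SimpleGraph.Walk.edges, List.mem_map] at h
  obtain ⟨d, hd, hde⟩ := h
  have hcase : (d.fst = x ∧ d.snd = y) ∨ (d.fst = y ∧ d.snd = x) := by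
    have : s(d.fst, d.snd) = s(x, y) := hde
    rwa [Sym2.eq_iff] at this
  rcases hcase with ⟨hf, hs⟩ | ⟨hf, hs⟩
  · cases Q with
    | nil => simp at hd
    | cons ha Q' =>
      rw [SimpleGraph.Walk.darts_cons, List.mem_cons] at hd
      rcases hd with rfl | hd
      · -- first dart; so the next vertex is y
        have hy : _ = y := hs
        subst hy
        have : Q' = SimpleGraph.Walk.nil := by
          rw [← SimpleGraph.Walk.isPath_iff_eq_nil]
          exact hQ.of_cons
        subst this
        simp
      · have := Q'.dart_fst_mem_support_of_mem_darts hd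
        rw [hf] at this
        exact absurd this ((SimpleGraph.Walk.cons_isPath_iff _ _).mp hQ).2
  · exact absurd hs (fun hh => aux_no_dart_snd_start hQ hd hh)

/-- Split a walk at the first vertex belonging to `S`. -/
lemma aux_firstHit {b a : V} (P : G.Walk b a) (S : Set V) :
    (∃ z ∈ P.support, z ∈ S) →
    ∃ y, y ∈ S ∧ ∃ (T : G.Walk b y) (R : G.Walk y a), P = T.append R ∧
      ∀ z ∈ T.support, z ∈ S → z = y := by
  induction P with
  | nil =>
    rintro ⟨z, hz, hzS⟩
    simp only [SimpleGraph.Walk.support_nil, List.mem_singleton] at hz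
    subst hz
    exact ⟨z, hzS, SimpleGraph.Walk.nil, SimpleGraph.Walk.nil, rfl, by simp⟩
  | @cons u v w ha P' ih =>
    rintro ⟨z, hz, hzS⟩
    by_cases hb : u ∈ S
    · exact ⟨u, hb, SimpleGraph.Walk.nil, SimpleGraph.Walk.cons ha P', rfl, by simp⟩
    · have hz' : z ∈ P'.support := by
        rw [SimpleGraph.Walk.support_cons, List.mem_cons] at hz
        rcases hz with rfl | hz
        · exact absurd hzS hb
        · exact hz
      obtain ⟨y, hyS, T', R, hPTR, hT⟩ := ih ⟨z, hz', hzS⟩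
      refine ⟨y, hyS, SimpleGraph.Walk.cons ha T', R, by rw [SimpleGraph.Walk.cons_append, hPTR], ?_⟩
      intro t ht htS
      rw [SimpleGraph.Walk.support_cons, List.mem_cons] at ht
      rcases ht with rfl | ht
      · exact absurd htS hb
      · exact hT t ht htS

/-- Glue two internally-disjoint, edge-disjoint paths into a cycle. -/
lemma aux_glue {x y : V} {P₁ : G.Walk x y} {P₂ : G.Walk y x}
    (h₁ : P₁.IsPath) (h₂ : P₂.IsPath) (hxy : x ≠ y)
    (hsup : ∀ z ∈ P₁.support, z ∈ P₂.support → z = x ∨ z = y)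
    (hedge : ∀ f ∈ P₁.edges, f ∉ P₂.edges) :
    (P₁.append P₂).IsCycle := by
  have hx1 : x ∉ P₁.support.tail := by
    have := h₁.support_nodup
    rw [P₁.support_eq_cons] at this
    exact (List.nodup_cons.mp this).1
  have hy2 : y ∉ P₂.support.tail := by
    have := h₂.support_nodup
    rw [P₂.support_eq_cons] at this
    exact (List.nodup_cons.mp this).1
  refine ⟨⟨⟨?_⟩, ?_⟩, ?_⟩
  · -- IsTrail
    rw [SimpleGraph.Walk.edges_append, List.nodup_append]
    exact ⟨h₁.isTrail.edges_nodup, h₂.isTrail.edges_nodup, fun f hf g hg hfg => hedge f hf (by rw [hfg]; exact hg)⟩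
  · -- ≠ nil
    intro hn
    have hy : y ∈ (P₁.append P₂).support := by
      rw [SimpleGraph.Walk.mem_support_append_iff]
      exact Or.inl P₁.end_mem_support
    rw [hn] at hy
    simp only [SimpleGraph.Walk.support_nil, List.mem_singleton] at hy
    exact hxy hy.symm
  · -- support tail nodup
    rw [SimpleGraph.Walk.tail_support_append, List.nodup_append]
    refine ⟨?_, ?_, ?_⟩
    · have := h₁.support_nodup
      rw [P₁.support_eq_cons] at this
      exact (List.nodup_cons.mp this).2
    · have := h₂.support_nodup
      rw [P₂.support_eq_cons] at this
      exact (List.nodup_cons.mp this).2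
    · intro z hz1 w hz2 hzw
      subst hzw
      have hz1' : z ∈ P₁.support := by rw [P₁.support_eq_cons]; exact List.mem_cons_of_mem _ hz1
      have hz2' : z ∈ P₂.support := by rw [P₂.support_eq_cons]; exact List.mem_cons_of_mem _ hz2
      rcases hsup z hz1' hz2' with rfl | rfl
      · exact hx1 hz1
      · exact hy2 hz2

/-- Normalize a cycle through vertex `a` with a dart starting at `a`. -/
lemma aux_normalize {a : V} {E : G.Walk a a} (hE : E.IsCycle) {d : G.Dart}
    (hd : d ∈ E.darts) (hfst : d.fst = a) :
    ∃ (b : V) (hab : G.Adj a b) (P : G.Walk b a), P.IsPath ∧ s(a, b) ∉ P.edges ∧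
      E.edges = s(a, b) :: P.edges ∧ d.edge = s(a, b) := by
  cases E with
  | nil => simp at hd
  | cons ha' P =>
    have hP := (SimpleGraph.Walk.cons_isCycle_iff P ha').mp hE
    rw [SimpleGraph.Walk.darts_cons, List.mem_cons] at hd
    rcases hd with rfl | hd
    · exact ⟨_, ha', P, hP.1, hP.2, by simp, rfl⟩
    · exact absurd hfst (fun h => aux_no_dart_fst_end hP.1 hd h)

/-- The start of a nonempty closed walk lies in the tail of its support. -/
lemma aux_start_mem_tail {w : V} {W : G.Walk w w} (hne : W ≠ SimpleGraph.Walk.nil) :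
    w ∈ W.support.tail := by
  cases W with
  | nil => exact absurd rfl hne
  | cons h p => simpa using p.end_mem_support

/-- Membership in the support of a rotation. -/
lemma aux_mem_support_rotate [DecidableEq V] {v x z : V} {C : G.Walk v v} (hC : C.IsCycle)
    (hx : x ∈ C.support) : z ∈ (C.rotate x hx).support ↔ z ∈ C.support := by
  constructor
  · intro hz
    rw [(C.rotate x hx).support_eq_cons, List.mem_cons] at hz
    rcases hz with rfl | hz
    · exact hx
    · have hz' : z ∈ C.support.tail := (SimpleGraph.Walk.support_rotate C x hx).mem_iff.mp hz
      rw [C.support_eq_cons]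
      exact List.mem_cons_of_mem _ hz'
  · intro hz
    rw [C.support_eq_cons, List.mem_cons] at hz
    have hz' : z ∈ C.support.tail := by
      rcases hz with rfl | hz
      · exact aux_start_mem_tail hC.ne_nil
      · exact hz
    have := (SimpleGraph.Walk.support_rotate C x hx).mem_iff.mpr hz'
    rw [(C.rotate x hx).support_eq_cons]
    exact List.mem_cons_of_mem _ this

lemma aux_common_cycle {e₁ e₂ e₃ : Sym2 V} {v w : V} {C : G.Walk v v} {D : G.Walk w w}
    (hC : C.IsCycle) (hD : D.IsCycle) (h1 : e₁ ∈ C.edges) (h2C : e₂ ∈ C.edges)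
    (h2D : e₂ ∈ D.edges) (h3 : e₃ ∈ D.edges) :
    ∃ (u : V) (W : G.Walk u u), W.IsCycle ∧ e₁ ∈ W.edges ∧ e₃ ∈ W.edges := by
  classical
  by_cases h3C : e₃ ∈ C.edges
  · exact ⟨v, C, hC, h1, h3C⟩
  have hne23 : e₂ ≠ e₃ := fun h => h3C (h ▸ h2C)
  -- endpoints of e₂
  revert h2C h2D hne23
  induction e₂ using Sym2.ind with | _ c₀ d₀ => ?_
  intro h2C h2D hne23
  have hcd : G.Adj c₀ d₀ := C.adj_of_mem_edges h2C
  have hc0C : c₀ ∈ C.support := C.fst_mem_support_of_mem_edges h2C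
  have hd0C : d₀ ∈ C.support := C.snd_mem_support_of_mem_edges h2C
  -- Step 1: normalize D around e₃
  obtain ⟨d, hd, hde⟩ := List.mem_map.mp h3
  have ha : d.fst ∈ D.support := D.dart_fst_mem_support_of_mem_darts hd
  set a := d.fst with ha_def
  obtain ⟨b, hab, P, hPpath, he3P, hEdges, hdedge⟩ :=
    aux_normalize (hD.rotate ha) ((D.rotate_darts a ha).mem_iff.mpr hd) rfl
  have he3 : e₃ = s(a, b) := by rw [← hde, hdedge]
  have h2rot : s(c₀, d₀) ∈ (D.rotate a ha).edges := (D.rotate_edges a ha).mem_iff.mpr h2D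
  have h2P : s(c₀, d₀) ∈ P.edges := by
    rw [hEdges, List.mem_cons] at h2rot
    rcases h2rot with h | h
    · exact absurd (he3.trans h.symm) (Ne.symm hne23)
    · exact h
  have hc0P : c₀ ∈ P.support := P.fst_mem_support_of_mem_edges h2P
  have hd0P : d₀ ∈ P.support := P.snd_mem_support_of_mem_edges h2P
  -- Step 2: first hits from both sides
  set S : Set V := {z | z ∈ C.support} with hS_def
  obtain ⟨y, hyS, T, R, hTR, hT⟩ := aux_firstHit P S ⟨c₀, hc0P, hc0C⟩
  have hPTR : (T.append R).IsPath := hTR ▸ hPpath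
  have hTpath : T.IsPath := hPTR.of_append_left
  have hRpath : R.IsPath := hPTR.of_append_right
  have hyR : y ∈ R.reverse.support := by
    rw [SimpleGraph.Walk.support_reverse, List.mem_reverse]
    exact R.start_mem_support
  obtain ⟨x, hxS, T₂, R₂, hTR₂, hT₂⟩ := aux_firstHit R.reverse S ⟨y, hyR, hyS⟩
  have hRrev : (T₂.append R₂).IsPath := hTR₂ ▸ hRpath.reverse
  have hT₂path : T₂.IsPath := hRrev.of_append_left
  -- x ≠ y
  have hxy : x ≠ y := by
    rintro rfl
    have hR₂ : R₂ = SimpleGraph.Walk.nil :=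
      SimpleGraph.Walk.isPath_iff_eq_nil.mp hRrev.of_append_right
    have hRT₂ : R.reverse = T₂ := by rw [hTR₂, hR₂, SimpleGraph.Walk.append_nil]
    have hall : ∀ z ∈ P.support, z ∈ S → z = x := by
      intro z hz hzS
      rw [hTR, SimpleGraph.Walk.mem_support_append_iff] at hz
      rcases hz with hz | hz
      · exact hT z hz hzS
      · have : z ∈ T₂.support := by
          rw [← hRT₂, SimpleGraph.Walk.support_reverse, List.mem_reverse]
          exact hz
        exact hT₂ z this hzS
    exact hcd.ne ((hall c₀ hc0P hc0C).trans (hall d₀ hd0P hd0C).symm)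
  -- the connecting path Q
  set Q : G.Walk x y := T₂.reverse.append (SimpleGraph.Walk.cons hab T) with hQ_def
  have hQe3 : e₃ ∈ Q.edges := by
    rw [hQ_def, he3, SimpleGraph.Walk.edges_append, SimpleGraph.Walk.edges_cons]
    simp
  have hQsup : ∀ z ∈ Q.support, z ∈ S → z = x ∨ z = y := by
    intro z hz hzS
    rw [hQ_def, SimpleGraph.Walk.mem_support_append_iff] at hz
    rcases hz with hz | hz
    · rw [SimpleGraph.Walk.support_reverse, List.mem_reverse] at hz
      exact Or.inl (hT₂ z hz hzS)
    · rw [SimpleGraph.Walk.support_cons, List.mem_cons] at hz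
      rcases hz with hza | hz
      · exact Or.inl (hT₂ z (by rw [hza]; exact T₂.start_mem_support) hzS)
      · exact Or.inr (hT z hz hzS)
  have hTRdisj : ∀ z, z ∈ T.support → z ∈ R.support → z = y := by
    intro z hzT hzR
    have hnd := hPTR.support_nodup
    rw [SimpleGraph.Walk.support_append] at hnd
    rw [R.support_eq_cons, List.mem_cons] at hzR
    rcases hzR with rfl | hzR
    · rfl
    · exact ((List.nodup_append.mp hnd).2.2 z hzT z hzR rfl).elim
  have hQpath : Q.IsPath := by
    rw [SimpleGraph.Walk.isPath_def, hQ_def, SimpleGraph.Walk.support_append,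
      SimpleGraph.Walk.support_cons, List.tail_cons, List.nodup_append]
    refine ⟨hT₂path.reverse.support_nodup, hTpath.support_nodup, ?_⟩
    intro z hz1 w hz2 hzw
    subst hzw
    rw [SimpleGraph.Walk.support_reverse, List.mem_reverse] at hz1
    have hzR : z ∈ R.support := by
      have : z ∈ R.reverse.support := by
        rw [hTR₂]
        exact SimpleGraph.Walk.subset_support_append_left _ _ hz1
      rwa [SimpleGraph.Walk.support_reverse, List.mem_reverse] at this
    have hzy : z = y := hTRdisj z hz2 hzR
    subst hzy
    exact hxy (hT₂ _ hz1 hyS).symm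
  -- Step 3: rotate C at x and split at y
  have hxC : x ∈ C.support := hxS
  set C₁ := C.rotate x hxC with hC₁_def
  have hC₁ : C₁.IsCycle := hC.rotate hxC
  have h1C₁ : e₁ ∈ C₁.edges := (C.rotate_edges x hxC).mem_iff.mpr h1
  have hyC₁ : y ∈ C₁.support := (aux_mem_support_rotate hC hxC).mpr hyS
  set A := C₁.takeUntil y hyC₁ with hA_def
  set B := C₁.dropUntil y hyC₁ with hB_def
  have hAB : A.append B = C₁ := C₁.take_spec hyC₁
  have htail : C₁.support.tail = A.support.tail ++ B.support.tail := by
    rw [← hAB, SimpleGraph.Walk.tail_support_append]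
  have hnd : (A.support.tail ++ B.support.tail).Nodup := htail ▸ hC₁.support_nodup
  have hndA := (List.nodup_append.mp hnd).1
  have hndB := (List.nodup_append.mp hnd).2.1
  have hdisjAB := (List.nodup_append.mp hnd).2.2
  have hxBtail : x ∈ B.support.tail := by
    have hxB : x ∈ B.support := B.end_mem_support
    rw [B.support_eq_cons, List.mem_cons] at hxB
    rcases hxB with h | h
    · exact absurd h hxy
    · exact h
  have hyAtail : y ∈ A.support.tail := by
    have hyA : y ∈ A.support := A.end_mem_support
    rw [A.support_eq_cons, List.mem_cons] at hyA
    rcases hyA with h | h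
    · exact absurd h.symm hxy
    · exact h
  have hApath : A.IsPath := by
    rw [SimpleGraph.Walk.isPath_def, A.support_eq_cons]
    exact List.nodup_cons.mpr ⟨fun h => hdisjAB x h x hxBtail rfl, hndA⟩
  have hBpath : B.IsPath := by
    rw [SimpleGraph.Walk.isPath_def, B.support_eq_cons]
    exact List.nodup_cons.mpr ⟨fun h => hdisjAB y hyAtail y h rfl, hndB⟩
  have hC₁subC : ∀ z ∈ C₁.support, z ∈ S := fun z hz =>
    (aux_mem_support_rotate hC hxC).mp hz
  have hAS : ∀ z ∈ A.support, z ∈ S := fun z hz =>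
    hC₁subC z (by rw [← hAB]; exact SimpleGraph.Walk.subset_support_append_left _ _ hz)
  have hBS : ∀ z ∈ B.support, z ∈ S := fun z hz =>
    hC₁subC z (by rw [← hAB]; exact SimpleGraph.Walk.subset_support_append_right _ _ hz)
  have hC₁edges : ∀ f ∈ C₁.edges, f ∈ C.edges := fun f hf =>
    (C.rotate_edges x hxC).mem_iff.mp hf
  have hAedges : ∀ f ∈ A.edges, f ∈ C.edges := fun f hf =>
    hC₁edges f (by rw [← hAB, SimpleGraph.Walk.edges_append]; exact List.mem_append_left _ hf)
  have hBedges : ∀ f ∈ B.edges, f ∈ C.edges := fun f hf =>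
    hC₁edges f (by rw [← hAB, SimpleGraph.Walk.edges_append]; exact List.mem_append_right _ hf)
  -- key: no edge of Q is an edge of C
  have hkey : ∀ f, f ∈ Q.edges → f ∈ C.edges → False := by
    intro f hfQ hfC
    obtain ⟨df, hdf, rfl⟩ := List.mem_map.mp hfQ
    have hfq : df.edge = s(df.fst, df.snd) := rfl
    rw [hfq] at hfC hfQ
    have hp : df.fst ∈ Q.support := Q.fst_mem_support_of_mem_edges hfQ
    have hq : df.snd ∈ Q.support := Q.snd_mem_support_of_mem_edges hfQ
    have hpC : df.fst ∈ S := C.fst_mem_support_of_mem_edges hfC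
    have hqC : df.snd ∈ S := C.snd_mem_support_of_mem_edges hfC
    have hpne : df.fst ≠ df.snd := df.adj.ne
    have hfxy : s(df.fst, df.snd) = s(x, y) := by
      rcases hQsup _ hp hpC with rfl | rfl <;> rcases hQsup _ hq hqC with h | h
      · exact absurd h.symm hpne
      · rw [h]
      · rw [h, Sym2.eq_swap]
      · exact absurd h.symm hpne
    rw [hfxy] at hfQ hfC
    have := aux_single_edge hQpath hfQ
    rw [this] at hQe3
    simp only [List.mem_singleton] at hQe3
    exact h3C (hQe3 ▸ hfC)
  -- split into the two cases
  rw [← hAB, SimpleGraph.Walk.edges_append, List.mem_append] at h1C₁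
  rcases h1C₁ with h1A | h1B
  · refine ⟨x, A.append Q.reverse, ?_, ?_, ?_⟩
    · refine aux_glue hApath hQpath.reverse hxy ?_ ?_
      · intro z hzA hzQ
        rw [SimpleGraph.Walk.support_reverse, List.mem_reverse] at hzQ
        exact hQsup z hzQ (hAS z hzA)
      · intro f hf hf'
        rw [SimpleGraph.Walk.edges_reverse, List.mem_reverse] at hf'
        exact hkey f hf' (hAedges f hf)
    · rw [SimpleGraph.Walk.edges_append]
      exact List.mem_append_left _ h1A
    · rw [SimpleGraph.Walk.edges_append]
      refine List.mem_append_right _ ?_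
      rw [SimpleGraph.Walk.edges_reverse, List.mem_reverse]
      exact hQe3
  · refine ⟨x, Q.append B, ?_, ?_, ?_⟩
    · refine aux_glue hQpath hBpath hxy ?_ ?_
      · intro z hzQ hzB
        exact hQsup z hzQ (hBS z hzB)
      · intro f hf hf'
        exact hkey f hf (hBedges f hf')
    · rw [SimpleGraph.Walk.edges_append]
      exact List.mem_append_right _ h1B
    · rw [SimpleGraph.Walk.edges_append]
      exact List.mem_append_left _ hQe3


lemma edgeRel_symm {e f : Sym2 V} (h : EdgeRel G e f) : EdgeRel G f e := by
  rcases h with rfl | ⟨v, c, hc, h1, h2⟩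
  · exact Or.inl rfl
  · exact Or.inr ⟨v, c, hc, h2, h1⟩

lemma edgeRel_trans {e₁ e₂ e₃ : Sym2 V} (h12 : EdgeRel G e₁ e₂) (h23 : EdgeRel G e₂ e₃) :
    EdgeRel G e₁ e₃ := by
  rcases h12 with rfl | ⟨v, C, hC, h1, h2⟩
  · exact h23
  rcases h23 with rfl | ⟨w, D, hD, h2', h3⟩
  · exact Or.inr ⟨v, C, hC, h1, h2⟩
  · exact Or.inr (aux_common_cycle hC hD h1 h2 h2' h3)

lemma edgeRel_map (φ : G ≃g G) {e f : Sym2 V} (h : EdgeRel G e f) :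
    EdgeRel G (Sym2.map ⇑φ e) (Sym2.map ⇑φ f) := by
  rcases h with rfl | ⟨v, c, hc, h1, h2⟩
  · exact Or.inl rfl
  · refine Or.inr ⟨φ v, c.map φ.toHom, hc.map φ.injective, ?_, ?_⟩ <;>
      rw [SimpleGraph.Walk.edges_map] <;> exact List.mem_map_of_mem ‹_›

lemma map_mem_edgeSet_iff (φ : G ≃g G) {e : Sym2 V} :
    Sym2.map ⇑φ e ∈ G.edgeSet ↔ e ∈ G.edgeSet := by
  induction e using Sym2.ind with | _ u v => ?_
  rw [Sym2.map_pair_eq, SimpleGraph.mem_edgeSet, SimpleGraph.mem_edgeSet]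
  exact φ.map_adj_iff

lemma map_symm_map (φ : G ≃g G) (e : Sym2 V) : Sym2.map ⇑φ.symm (Sym2.map ⇑φ e) = e := by
  rw [Sym2.map_map]
  have : (⇑φ.symm ∘ ⇑φ) = id := by ext z; simp
  rw [this, Sym2.map_id, id_eq]

/-- If an automorphism sends one edge of a lobe to another edge of the same lobe, then
it maps the lobe's edge set into itself (iff version). -/
lemma lobe_edge_invariant {e f₁ f₂ : Sym2 V} (φ : G ≃g G)
    (hf₁ : f₁ ∈ lobeEdges G e) (hf₂ : f₂ ∈ lobeEdges G e)
    (hφ : Sym2.map ⇑φ f₁ = f₂) :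
    ∀ g, g ∈ lobeEdges G e ↔ Sym2.map ⇑φ g ∈ lobeEdges G e := by
  intro g
  constructor
  · rintro ⟨hgE, hge⟩
    refine ⟨(map_mem_edgeSet_iff φ).mpr hgE, ?_⟩
    have h1 : EdgeRel G f₁ g := edgeRel_trans (edgeRel_symm hf₁.2) hge
    have h2 : EdgeRel G f₂ (Sym2.map ⇑φ g) := hφ ▸ edgeRel_map φ h1
    exact edgeRel_trans hf₂.2 h2
  · rintro ⟨hgE, hge⟩
    refine ⟨by rwa [map_mem_edgeSet_iff φ] at hgE, ?_⟩
    have h1 : EdgeRel G f₂ (Sym2.map ⇑φ g) := edgeRel_trans (edgeRel_symm hf₂.2) hge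
    have h2 := edgeRel_map φ.symm h1
    rw [map_symm_map] at h2
    rw [← hφ, map_symm_map] at h2
    exact edgeRel_trans hf₁.2 h2


end Helpers

theorem stmt_6 {V : Type*} (G : SimpleGraph V) (hG : G.Connected)
    (hE : G.edgeSet.Nonempty) (h : EdgeTransitive G) :
    ∀ e ∈ G.edgeSet, EdgeTransitive (lobeSubgraph G e).coe := by
  intro e he E₁ hE₁ E₂ hE₂
  revert hE₂
  induction E₂ using Sym2.ind with | _ a₂ b₂ => ?_
  intro hE₂
  revert hE₁
  induction E₁ using Sym2.ind with | _ a₁ b₁ => ?_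
  intro hE₁
  rw [SimpleGraph.mem_edgeSet, SimpleGraph.Subgraph.coe_adj] at hE₁ hE₂
  have h₁ : s((a₁ : V), (b₁ : V)) ∈ lobeEdges G e := ⟨(G.mem_edgeSet).mpr hE₁.1, hE₁.2⟩
  have h₂ : s((a₂ : V), (b₂ : V)) ∈ lobeEdges G e := ⟨(G.mem_edgeSet).mpr hE₂.1, hE₂.2⟩
  obtain ⟨φ, hφ⟩ := h _ h₁.1 _ h₂.1
  have hinv := lobe_edge_invariant φ h₁ h₂ hφ
  have hvert : ∀ v : V, v ∈ (lobeSubgraph G e).verts ↔ φ v ∈ (lobeSubgraph G e).verts := by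
    intro v
    constructor
    · rintro ⟨f, hf, hvf⟩
      exact ⟨Sym2.map ⇑φ f, (hinv f).mp hf, Sym2.mem_map.mpr ⟨v, hvf, rfl⟩⟩
    · rintro ⟨f, hf, hvf⟩
      refine ⟨Sym2.map ⇑φ.symm f, ?_, ?_⟩
      · apply (hinv _).mpr
        have h' : Sym2.map ⇑φ (Sym2.map ⇑φ.symm f) = f := by
          rw [Sym2.map_map]
          have hid : (⇑φ ∘ ⇑φ.symm) = id := by ext z; simp
          rw [hid, Sym2.map_id, id_eq]
        rwa [h']
      · exact Sym2.mem_map.mpr ⟨φ v, hvf, by simp⟩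
  have hAdjIff : ∀ p q : V, (lobeSubgraph G e).Adj p q ↔ s(p, q) ∈ lobeEdges G e := by
    intro p q
    exact ⟨fun hh => ⟨(G.mem_edgeSet).mpr hh.1, hh.2⟩,
      fun hh => ⟨(G.mem_edgeSet).mp hh.1, hh.2⟩⟩
  refine ⟨⟨Equiv.subtypeEquiv φ.toEquiv hvert, ?_⟩, ?_⟩
  · intro u w
    show (lobeSubgraph G e).coe.Adj _ _ ↔ (lobeSubgraph G e).coe.Adj u w
    rw [SimpleGraph.Subgraph.coe_adj, SimpleGraph.Subgraph.coe_adj, hAdjIff, hAdjIff]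
    have heq : s(((Equiv.subtypeEquiv φ.toEquiv hvert) u : V),
        ((Equiv.subtypeEquiv φ.toEquiv hvert) w : V)) = Sym2.map ⇑φ s((u : V), (w : V)) := by
      rw [Sym2.map_pair_eq]
      rfl
    rw [heq]
    exact (hinv _).symm
  · apply Sym2.map.injective Subtype.val_injective
    rw [Sym2.map_pair_eq, Sym2.map_pair_eq, Sym2.map_pair_eq]
    rw [Sym2.map_pair_eq] at hφ
    exact hφ
end
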